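/- Stability estimate for a quadratic ROM from a linear FOM: let A ∈ ℝ^{N×N}, V ∈ ℝ^{N×r} with VᵀV = I, W ∈ ℝ^{N×r²}, and let q̃ : [0,T] → ℝ^r solve q̃'(t) = VᵀAV q̃(t) + VᵀAW (q̃(t) ⊗ q̃(t)) with q̃(0) = Vᵀq₀. If λ is the largest eigenvalue of A_sym = (A + Aᵀ)/2, then for all t ∈ [0,T], ‖q̃(t)‖₂ ≤ ‖A‖₂ ‖W‖₂ ∫₀ᵗ ‖q̃(s) ⊗ q̃(s)‖₂ e^{λ(t−s)} ds + e^{λt} ‖Vᵀq₀‖₂. -/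

import Mathlib

open scoped Matrix

/-- Kronecker product of vectors: `(x ⊗ y)_{(i,j)} = x_i y_j`. -/
def vecKron {α β : Type*} (x : α → ℝ) (y : β → ℝ) : α × β → ℝ :=
  fun p => x p.1 * y p.2

/-!
Taking the inner product of the ROM equation with `q̃` gives the energy inequality
`⟪q̃, q̃'⟫ ≤ λ ‖q̃‖² + ‖A‖ ‖W‖ ‖q̃ ⊗ q̃‖ ‖q̃‖`: moving `Vᵀ` across the inner product, the linear
term is the quadratic form of `A`, hence of `A_sym`, at `V q̃`, which is at most
`λ ‖V q̃‖² = λ ‖q̃‖²`, and the quadratic term is bounded by Cauchy–Schwarz. The integrating factor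
`e^{-λt}` removes the `λ ‖q̃‖²` term, and what is left, `‖u‖' ≤ G`, is integrated by comparison
with strict supersolutions `‖u(0)‖ + ∫ G + ε (1 + t)`.
-/

open Matrix Set Topology Real
open scoped RealInnerProductSpace

section EuclideanMatrix

variable {m n p : Type*} [Fintype m] [Fintype n] [Fintype p] [DecidableEq m] [DecidableEq n]
  [DecidableEq p]

theorem Matrix.IsHermitian.inner_toEuclideanLin_self_le_iSup_eigenvalues {M : Matrix n n ℝ}
    (hM : M.IsHermitian) (y : EuclideanSpace ℝ n) :
    ⟪y, toEuclideanLin M y⟫ ≤ (⨆ i, hM.eigenvalues i) * ‖y‖ ^ 2 := by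
  set b := hM.eigenvectorBasis
  have hb : ∀ i, toEuclideanLin M (b i) = hM.eigenvalues i • b i := fun i =>
    WithLp.ofLp_injective 2 (by simpa [toLpLin_apply] using hM.mulVec_eigenvectorBasis i)
  have hsymm := isSymmetric_toEuclideanLin_iff.mpr hM
  calc ⟪y, toEuclideanLin M y⟫ = ∑ i, ⟪y, b i⟫ * ⟪b i, toEuclideanLin M y⟫ :=
        (b.sum_inner_mul_inner _ _).symm
    _ = ∑ i, hM.eigenvalues i * (⟪y, b i⟫ * ⟪b i, y⟫) := by
        refine Finset.sum_congr rfl fun i _ => ?_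
        rw [← hsymm, hb, real_inner_smul_left]; ring
    _ ≤ ∑ i, (⨆ j, hM.eigenvalues j) * (⟪y, b i⟫ * ⟪b i, y⟫) := by
        gcongr with i
        · rw [real_inner_comm]; exact mul_self_nonneg _
        · exact le_ciSup (finite_range _).bddAbove i
    _ = (⨆ i, hM.eigenvalues i) * ‖y‖ ^ 2 := by
        rw [← Finset.mul_sum, b.sum_inner_mul_inner, real_inner_self_eq_norm_sq]

theorem inner_toEuclideanLin_transpose_mul (V : Matrix m n ℝ) (B : Matrix m p ℝ)
    (x : EuclideanSpace ℝ n) (z : EuclideanSpace ℝ p) :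
    ⟪x, toEuclideanLin (Vᵀ * B) z⟫ = ⟪toEuclideanLin V x, toEuclideanLin B z⟫ := by
  rw [toLpLin_mul_same, LinearMap.comp_apply, ← conjTranspose_eq_transpose_of_trivial,
    toEuclideanLin_conjTranspose_eq_adjoint, LinearMap.adjoint_inner_right]

theorem norm_toEuclideanLin_eq_of_transpose_mul_self_eq_one {V : Matrix m n ℝ} (hV : Vᵀ * V = 1)
    (x : EuclideanSpace ℝ n) : ‖toEuclideanLin V x‖ = ‖x‖ := by
  have h := inner_toEuclideanLin_transpose_mul V V x x
  rw [hV, toLpLin_one, LinearMap.id_apply, real_inner_self_eq_norm_sq,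
    real_inner_self_eq_norm_sq] at h
  exact ((pow_left_inj₀ (norm_nonneg _) (norm_nonneg _) two_ne_zero).mp h).symm

theorem inner_toEuclideanLin_symmPart (A : Matrix n n ℝ) (y : EuclideanSpace ℝ n) :
    ⟪y, toEuclideanLin ((1 / 2 : ℝ) • (A + Aᵀ)) y⟫ = ⟪y, toEuclideanLin A y⟫ := by
  rw [map_smul, map_add, LinearMap.smul_apply, LinearMap.add_apply, inner_smul_right,
    inner_add_right, ← conjTranspose_eq_transpose_of_trivial,
    toEuclideanLin_conjTranspose_eq_adjoint, LinearMap.adjoint_inner_right, real_inner_comm y]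
  ring

theorem norm_toEuclideanLin_apply_apply_le (A : Matrix m m ℝ) (W : Matrix m p ℝ)
    (k : EuclideanSpace ℝ p) :
    ‖toEuclideanLin A (toEuclideanLin W k)‖ ≤
      ‖toEuclideanCLM (𝕜 := ℝ) A‖ * ‖(toEuclideanLin W).toContinuousLinearMap‖ * ‖k‖ := by
  calc ‖toEuclideanLin A (toEuclideanLin W k)‖
      = ‖toEuclideanCLM (𝕜 := ℝ) A ((toEuclideanLin W).toContinuousLinearMap k)‖ := rfl
    _ ≤ ‖toEuclideanCLM (𝕜 := ℝ) A‖ * ‖(toEuclideanLin W).toContinuousLinearMap k‖ :=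
        ContinuousLinearMap.le_opNorm _ _
    _ ≤ _ := by
        rw [mul_assoc]; gcongr; exact ContinuousLinearMap.le_opNorm _ _

theorem inner_romVectorField_le (A : Matrix m m ℝ) {V : Matrix m n ℝ} (W : Matrix m p ℝ)
    (hV : Vᵀ * V = 1) (hA : ((1 / 2 : ℝ) • (A + Aᵀ)).IsHermitian)
    (x : EuclideanSpace ℝ n) (k : EuclideanSpace ℝ p) :
    ⟪x, toEuclideanLin (Vᵀ * A * V) x + toEuclideanLin (Vᵀ * A * W) k⟫ ≤
      (⨆ i, hA.eigenvalues i) * ‖x‖ ^ 2 +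
        ‖toEuclideanCLM (𝕜 := ℝ) A‖ * ‖(toEuclideanLin W).toContinuousLinearMap‖ * ‖k‖ * ‖x‖ := by
  rw [inner_add_right, Matrix.mul_assoc, Matrix.mul_assoc, inner_toEuclideanLin_transpose_mul,
    inner_toEuclideanLin_transpose_mul, toLpLin_mul_same, toLpLin_mul_same, LinearMap.comp_apply,
    LinearMap.comp_apply, ← norm_toEuclideanLin_eq_of_transpose_mul_self_eq_one hV x]
  set y := toEuclideanLin V x
  refine add_le_add ?_ ?_
  · rw [← inner_toEuclideanLin_symmPart]
    exact hA.inner_toEuclideanLin_self_le_iSup_eigenvalues y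
  · calc ⟪y, toEuclideanLin A (toEuclideanLin W k)⟫
        ≤ ‖y‖ * ‖toEuclideanLin A (toEuclideanLin W k)‖ := real_inner_le_norm _ _
      _ ≤ ‖y‖ * (‖toEuclideanCLM (𝕜 := ℝ) A‖ * ‖(toEuclideanLin W).toContinuousLinearMap‖ * ‖k‖) :=
          mul_le_mul_of_nonneg_left (norm_toEuclideanLin_apply_apply_le A W k) (norm_nonneg y)
      _ = _ := by ring

end EuclideanMatrix

theorem ContinuousOn.hasDerivWithinAt_integral_Ici {F : Type*} [NormedAddCommGroup F]
    [NormedSpace ℝ F] [CompleteSpace F] {G : ℝ → F} {a b x : ℝ}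
    (hG : ContinuousOn G (Icc a b)) (hx : x ∈ Ico a b) :
    HasDerivWithinAt (fun t => ∫ s in a..t, G s) (G x) (Ici x) x := by
  have hnhds : Icc a b ∈ 𝓝[>] x := Icc_mem_nhdsGT_of_mem hx
  have hxIcc : x ∈ Icc a b := Ico_subset_Icc_self hx
  refine intervalIntegral.integral_hasDerivWithinAt_right ?_
    ⟨Icc a b, hnhds, hG.aestronglyMeasurable measurableSet_Icc⟩
    ((hG x hxIcc).mono_of_mem_nhdsWithin hnhds)
  exact (hG.mono (uIcc_subset_Icc (left_mem_Icc.2 (hx.1.trans hx.2.le)) hxIcc)).intervalIntegrable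

section Gronwall

variable {E : Type*} [NormedAddCommGroup E] [InnerProductSpace ℝ E]

-- Squares are compared because `‖f‖` need not be differentiable where `f` vanishes.
theorem norm_le_of_inner_deriv_lt {f f' : ℝ → E} {ψ ψ' : ℝ → ℝ} {a b : ℝ}
    (hf : ContinuousOn f (Icc a b)) (hf' : ∀ t ∈ Ico a b, HasDerivWithinAt f (f' t) (Ici t) t)
    (hψ : ContinuousOn ψ (Icc a b)) (hψ' : ∀ t ∈ Ico a b, HasDerivWithinAt ψ (ψ' t) (Ici t) t)
    (hψ0 : ∀ t ∈ Icc a b, 0 ≤ ψ t) (ha : ‖f a‖ ≤ ψ a)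
    (bound : ∀ t ∈ Ico a b, ‖f t‖ = ψ t → ⟪f t, f' t⟫ < ψ t * ψ' t) :
    ∀ t ∈ Icc a b, ‖f t‖ ≤ ψ t := by
  intro t ht
  have hsq : ‖f t‖ ^ 2 ≤ ψ t ^ 2 := by
    refine image_le_of_deriv_right_lt_deriv_boundary' (f := fun t => ‖f t‖ ^ 2)
      (B := fun t => ψ t ^ 2) (hf.norm.pow 2) (fun t ht => (hf' t ht).norm_sq)
      (pow_le_pow_left₀ (norm_nonneg _) ha 2) (hψ.pow 2) (fun t ht => (hψ' t ht).pow 2) ?_ ht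
    intro s hs heq
    have hnorm : ‖f s‖ = ψ s :=
      (pow_left_inj₀ (norm_nonneg _) (hψ0 s (Ico_subset_Icc_self hs)) two_ne_zero).mp heq
    simp only [Nat.cast_ofNat, pow_one, Nat.add_one_sub_one]
    linarith [bound s hs hnorm]
  exact (pow_le_pow_iff_left₀ (norm_nonneg _) (hψ0 t ht) two_ne_zero).mp hsq

theorem norm_le_add_integral_of_inner_deriv_le {f f' : ℝ → E} {G : ℝ → ℝ} {a b : ℝ}
    (hf : ContinuousOn f (Icc a b)) (hf' : ∀ t ∈ Ico a b, HasDerivWithinAt f (f' t) (Ici t) t)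
    (hG : ContinuousOn G (Icc a b)) (hG0 : ∀ t ∈ Icc a b, 0 ≤ G t)
    (hbound : ∀ t ∈ Ico a b, ⟪f t, f' t⟫ ≤ G t * ‖f t‖) :
    ∀ t ∈ Icc a b, ‖f t‖ ≤ ‖f a‖ + ∫ s in a..t, G s := by
  intro t ht
  have hab : a ≤ b := ht.1.trans ht.2
  have hprim_nonneg : ∀ t ∈ Icc a b, 0 ≤ ∫ s in a..t, G s := fun t ht =>
    intervalIntegral.integral_nonneg ht.1 fun s hs => hG0 s ⟨hs.1, hs.2.trans ht.2⟩
  have hprim_cont : ContinuousOn (fun t => ∫ s in a..t, G s) (Icc a b) := by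
    simpa only [uIcc_of_le hab] using intervalIntegral.continuousOn_primitive_interval'
      (hG.intervalIntegrable_of_Icc hab) left_mem_uIcc
  have hsupersolution : ∀ ε > 0, ‖f t‖ ≤ ‖f a‖ + (∫ s in a..t, G s) + ε * (1 + (t - a)) := by
    intro ε hε
    set ψ : ℝ → ℝ := fun t => ‖f a‖ + (∫ s in a..t, G s) + ε * (1 + (t - a)) with hψ
    have hψ_pos : ∀ t ∈ Icc a b, 0 < ψ t := fun t ht => by
      have := hprim_nonneg t ht
      have := sub_nonneg.2 ht.1
      positivity
    have hψ' : ∀ t ∈ Ico a b, HasDerivWithinAt ψ (G t + ε) (Ici t) t := fun t ht =>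
      (((hG.hasDerivWithinAt_integral_Ici ht).const_add ‖f a‖).add
        ((((hasDerivWithinAt_id t _).sub_const a).const_add 1).const_mul ε)).congr_deriv (by ring)
    refine norm_le_of_inner_deriv_lt hf hf' (by fun_prop) hψ' (fun t ht => (hψ_pos t ht).le)
      (by simp [hψ, hε.le]) (fun s hs hnorm => ?_) t ht
    have hψs := hψ_pos s (Ico_subset_Icc_self hs)
    calc ⟪f s, f' s⟫ ≤ G s * ψ s := hnorm ▸ hbound s hs
      _ < ψ s * (G s + ε) := by nlinarith
  refine le_of_forall_pos_le_add fun δ hδ => ?_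
  have hta : 0 < 1 + (t - a) := by linarith [ht.1]
  simpa [div_mul_cancel₀ _ hta.ne'] using hsupersolution (δ / (1 + (t - a))) (by positivity)

theorem norm_le_integral_exp_of_inner_deriv_le {f f' : ℝ → E} {g : ℝ → ℝ} {a b lam : ℝ}
    (hf : ContinuousOn f (Icc a b)) (hf' : ∀ t ∈ Ico a b, HasDerivWithinAt f (f' t) (Ici t) t)
    (hg : ContinuousOn g (Icc a b)) (hg0 : ∀ t ∈ Icc a b, 0 ≤ g t)
    (hbound : ∀ t ∈ Ico a b, ⟪f t, f' t⟫ ≤ lam * ‖f t‖ ^ 2 + g t * ‖f t‖) :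
    ∀ t ∈ Icc a b, ‖f t‖ ≤
      (∫ s in a..t, g s * exp (lam * (t - s))) + exp (lam * (t - a)) * ‖f a‖ := by
  intro t ht
  set φ : ℝ → ℝ := fun s => exp (-(lam * s)) with hφ
  have hφ' : ∀ s, HasDerivAt φ (-lam * φ s) s := fun s => by
    simpa [hφ, mul_comm] using ((hasDerivAt_id s).const_mul lam).neg.exp
  have damped := norm_le_add_integral_of_inner_deriv_le (f := fun s => φ s • f s)
    (f' := fun s => φ s • f' s + (-lam * φ s) • f s) (G := fun s => φ s * g s)
    (by fun_prop) (fun s hs => ((hφ' s).hasDerivWithinAt.smul (hf' s hs)))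
    (by fun_prop) (fun s hs => mul_nonneg (exp_pos _).le (hg0 s hs)) ?_ t ht
  · have hnorm : ∀ s, ‖φ s • f s‖ = exp (-(lam * s)) * ‖f s‖ := fun s => by
      rw [norm_smul, Real.norm_of_nonneg (exp_pos _).le]
    calc ‖f t‖ = exp (lam * t) * ‖φ t • f t‖ := by
          rw [hnorm, ← mul_assoc, ← exp_add, add_neg_cancel, exp_zero, one_mul]
      _ ≤ exp (lam * t) * (‖φ a • f a‖ + ∫ s in a..t, φ s * g s) := by gcongr
      _ = _ := by
          have hexp : ∀ s, exp (lam * t) * exp (-(lam * s)) = exp (lam * (t - s)) := fun s => by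
            rw [← exp_add, mul_sub, sub_eq_add_neg]
          rw [mul_add, ← intervalIntegral.integral_const_mul, hnorm, ← mul_assoc, hexp, add_comm]
          congr 1
          refine intervalIntegral.integral_congr fun s _ => ?_
          rw [← hexp]
          ring
  · intro s hs
    have hφs : 0 < φ s := exp_pos _
    simp only [inner_add_right, real_inner_smul_left, real_inner_smul_right,
      real_inner_self_eq_norm_sq, norm_smul, Real.norm_of_nonneg hφs.le]
    nlinarith [mul_le_mul_of_nonneg_left (hbound s hs) (sq_nonneg (φ s))]

end Gronwall

theorem sqrt_sum_sq_eq_norm_toLp {ι : Type*} [Fintype ι] (x : ι → ℝ) :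
    √(∑ i, x i ^ 2) = ‖WithLp.toLp 2 x‖ := by
  simp [EuclideanSpace.norm_eq]

theorem ContinuousOn.vecKron {X α β : Type*} [TopologicalSpace X] {s : Set X} {x : X → α → ℝ}
    {y : X → β → ℝ} (hx : ContinuousOn x s) (hy : ContinuousOn y s) :
    ContinuousOn (fun t => vecKron (x t) (y t)) s :=
  continuousOn_pi.2 fun p => (continuousOn_pi.1 hx p.1).mul (continuousOn_pi.1 hy p.2)

theorem quadratic_rom_stability_general {N r : ℕ} (T : ℝ)
    (A : Matrix (Fin N) (Fin N) ℝ) (V : Matrix (Fin N) (Fin r) ℝ)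
    (W : Matrix (Fin N) (Fin r × Fin r) ℝ) (hV : Vᵀ * V = 1)
    (q0 : Fin N → ℝ) (qt : ℝ → Fin r → ℝ)
    (hq0 : qt 0 = Vᵀ.mulVec q0)
    (hode : ∀ t ∈ Set.Icc (0 : ℝ) T, HasDerivAt qt
      ((Vᵀ * A * V).mulVec (qt t) + (Vᵀ * A * W).mulVec (vecKron (qt t) (qt t))) t)
    (hA : ((1 / 2 : ℝ) • (A + Aᵀ)).IsHermitian)
    (lam : ℝ) (hlam : lam = ⨆ i, hA.eigenvalues i) :
    ∀ t ∈ Set.Icc (0 : ℝ) T,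
      Real.sqrt (∑ i, qt t i ^ 2) ≤
        ‖Matrix.toEuclideanCLM (𝕜 := ℝ) A‖ *
            ‖LinearMap.toContinuousLinearMap (Matrix.toEuclideanLin W)‖ *
            (∫ s in (0 : ℝ)..t,
              Real.sqrt (∑ p, vecKron (qt s) (qt s) p ^ 2) * Real.exp (lam * (t - s))) +
          Real.exp (lam * t) * Real.sqrt (∑ i, Vᵀ.mulVec q0 i ^ 2) := by
  subst hlam
  set C := ‖toEuclideanCLM (𝕜 := ℝ) A‖ * ‖(toEuclideanLin W).toContinuousLinearMap‖
  have hq : ContinuousOn qt (Icc 0 T) := fun t ht => (hode t ht).continuousAt.continuousWithinAt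
  have hq_deriv : ∀ s ∈ Ico 0 T, HasDerivWithinAt (fun s => WithLp.toLp 2 (qt s))
      (WithLp.toLp 2 ((Vᵀ * A * V) *ᵥ qt s + (Vᵀ * A * W) *ᵥ vecKron (qt s) (qt s))) (Ici s) s :=
    fun s hs => ((PiLp.hasFDerivAt_toLp 2 (qt s)).comp_hasDerivAt s
      (hode s (Ico_subset_Icc_self hs))).hasDerivWithinAt
  have hg : ContinuousOn (fun s => C * ‖WithLp.toLp 2 (vecKron (qt s) (qt s))‖) (Icc 0 T) :=
    continuousOn_const.mul ((PiLp.continuous_toLp 2 _).norm.comp_continuousOn (hq.vecKron hq))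
  intro t ht
  have key := norm_le_integral_exp_of_inner_deriv_le
    ((PiLp.continuous_toLp 2 _).comp_continuousOn hq) hq_deriv hg (fun s _ => by positivity)
    (fun s _ => inner_romVectorField_le A W hV hA
      (WithLp.toLp 2 (qt s)) (WithLp.toLp 2 (vecKron (qt s) (qt s)))) t ht
  simpa [sqrt_sum_sq_eq_norm_toLp, hq0, intervalIntegral.integral_const_mul, mul_assoc] using key

/-- Stability estimate for the quadratic ROM obtained from a linear FOM via a
quadratic-manifold approximation: if `q̃' = VᵀAV q̃ + VᵀAW (q̃ ⊗ q̃)` with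
`q̃(0) = Vᵀq₀`, `VᵀV = I`, and `λ` is the largest eigenvalue of the symmetric
part `(A + Aᵀ)/2`, then for all `t ∈ [0,T]`,
`‖q̃(t)‖₂ ≤ ‖A‖₂ ‖W‖₂ ∫₀ᵗ ‖q̃(s) ⊗ q̃(s)‖₂ e^{λ(t−s)} ds + e^{λt} ‖Vᵀq₀‖₂`,
where `‖·‖₂` denotes Euclidean vector norms and spectral matrix norms. -/
theorem quadratic_rom_stability {N r : ℕ} [NeZero N] (T : ℝ) (hT : 0 < T)
    (A : Matrix (Fin N) (Fin N) ℝ) (V : Matrix (Fin N) (Fin r) ℝ)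
    (W : Matrix (Fin N) (Fin r × Fin r) ℝ) (hV : Vᵀ * V = 1)
    (q0 : Fin N → ℝ) (qt : ℝ → Fin r → ℝ)
    (hq0 : qt 0 = Vᵀ.mulVec q0)
    (hode : ∀ t ∈ Set.Icc (0 : ℝ) T, HasDerivAt qt
      ((Vᵀ * A * V).mulVec (qt t) + (Vᵀ * A * W).mulVec (vecKron (qt t) (qt t))) t)
    (hA : ((1 / 2 : ℝ) • (A + Aᵀ)).IsHermitian)
    (lam : ℝ) (hlam : lam = ⨆ i, hA.eigenvalues i) :
    ∀ t ∈ Set.Icc (0 : ℝ) T,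
      Real.sqrt (∑ i, qt t i ^ 2) ≤
        ‖Matrix.toEuclideanCLM (𝕜 := ℝ) A‖ *
            ‖LinearMap.toContinuousLinearMap (Matrix.toEuclideanLin W)‖ *
            (∫ s in (0 : ℝ)..t,
              Real.sqrt (∑ p, vecKron (qt s) (qt s) p ^ 2) * Real.exp (lam * (t - s))) +
          Real.exp (lam * t) * Real.sqrt (∑ i, Vᵀ.mulVec q0 i ^ 2) :=
  quadratic_rom_stability_general T A V W hV q0 qt hq0 hode hA lam hlam
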